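/- Let A and B be Banach algebras, T ∈ hom(B, A), and ψ ∈ σ(B). Then A ×_T B is (0,ψ)-inner amenable if and only if B is ψ-inner amenable. Specifically: if (m,n) is a (0,ψ)-inner mean for A ×_T B then n is a ψ-inner mean for B; conversely if n is a ψ-inner mean for B then (−T''(n), n) is a (0,ψ)-inner mean for A ×_T B. -/

import Mathlib

open ContinuousLinearMap NormedSpace

variable {A B : Type*}
  [NonUnitalNormedRing A] [NormedSpace ℂ A] [IsScalarTower ℂ A A] [SMulCommClass ℂ A A]
  [CompleteSpace A]
  [NonUnitalNormedRing B] [NormedSpace ℂ B] [IsScalarTower ℂ B B] [SMulCommClass ℂ B B]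
  [CompleteSpace B]

/-- The morphism-product multiplication on `A × B`:
`(a₁,b₁)·(a₂,b₂) = (a₁a₂ + a₁T(b₂) + T(b₁)a₂, b₁b₂)`. -/
noncomputable def tMul (T : B →L[ℂ] A) (u v : A × B) : A × B :=
  (u.1 * v.1 + u.1 * T v.2 + T u.2 * v.1, u.2 * v.2)

/-- The ℓ¹ norm `‖(a,b)‖ = ‖a‖ + ‖b‖` on `A × B`. -/
noncomputable def tNorm (u : A × B) : ℝ := ‖u.1‖ + ‖u.2‖

/-- Auxiliary map: for `Φ` in the second dual of `E` and a bundled bilinear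
multiplication `M` on `E`, this is `f ↦ (a ↦ Φ (f ∘ M a))`, i.e. `f ↦ Φ · f`. -/
noncomputable def rAct {E : Type*} [NormedAddCommGroup E] [NormedSpace ℂ E]
    (M : E →L[ℂ] E →L[ℂ] E) (Φ : StrongDual ℂ (StrongDual ℂ E)) : StrongDual ℂ E →L[ℂ] StrongDual ℂ E :=
  (compL ℂ E (StrongDual ℂ E) ℂ Φ).comp
    (((compL ℂ E (E →L[ℂ] E) (StrongDual ℂ E)).flip M).comp (compL ℂ E E ℂ))

/-- The first Arens product `Φ □ Ψ` on the second dual of `E`, where the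
multiplication of `E` is given by the bundled bilinear map `M`:
`⟨Φ□Ψ, f⟩ = ⟨Φ, Ψ·f⟩` with `(Ψ·f)(a) = Ψ(f·a)` and `(f·a)(x) = f(ax)`. -/
noncomputable def arens1 {E : Type*} [NormedAddCommGroup E] [NormedSpace ℂ E]
    (M : E →L[ℂ] E →L[ℂ] E) (Φ Ψ : StrongDual ℂ (StrongDual ℂ E)) : StrongDual ℂ (StrongDual ℂ E) :=
  Φ.comp (rAct M Ψ)

/-- The second Arens product `Φ ◊ Ψ` on the second dual of `E`:
`⟨Φ◊Ψ, f⟩ = ⟨Ψ, f·Φ⟩` with `(f·Φ)(a) = Φ(a·f)` and `(a·f)(x) = f(xa)`. -/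
noncomputable def arens2 {E : Type*} [NormedAddCommGroup E] [NormedSpace ℂ E]
    (M : E →L[ℂ] E →L[ℂ] E) (Φ Ψ : StrongDual ℂ (StrongDual ℂ E)) : StrongDual ℂ (StrongDual ℂ E) :=
  Ψ.comp (rAct M.flip Φ)

/-- Bundled bilinear map `(u,v) ↦ M (f u) (g v)`. -/
noncomputable def bcomp {P E : Type*} [NormedAddCommGroup P] [NormedSpace ℂ P]
    [NormedAddCommGroup E] [NormedSpace ℂ E]
    (M : E →L[ℂ] E →L[ℂ] E) (f g : P →L[ℂ] E) : P →L[ℂ] P →L[ℂ] E :=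
  ((compL ℂ P E E).flip g).comp (M.comp f)

/-- The morphism-product multiplication `tMul T`, as a bundled bilinear map;
`tMulCLM T u v = tMul T u v`. -/
noncomputable def tMulCLM (T : B →L[ℂ] A) : (A × B) →L[ℂ] (A × B) →L[ℂ] (A × B) :=
  ((compL ℂ (A × B) A (A × B) (inl ℂ A B)).comp
    (bcomp (mul ℂ A) (fst ℂ A B) (fst ℂ A B + T.comp (snd ℂ A B)) +
     bcomp (mul ℂ A) (T.comp (snd ℂ A B)) (fst ℂ A B))) +
  ((compL ℂ (A × B) B (A × B) (inr ℂ A B)).comp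
    (bcomp (mul ℂ B) (snd ℂ A B) (snd ℂ A B)))

/-- The adjoint `T' : A' → B'`, `T'(f) = f ∘ T`. -/
noncomputable def dualT (T : B →L[ℂ] A) : StrongDual ℂ A →L[ℂ] StrongDual ℂ B := (compL ℂ B A ℂ).flip T

/-- The double adjoint `T'' : B'' → A''`, `T''(F) = F ∘ T'`. -/
noncomputable def ddT (T : B →L[ℂ] A) : StrongDual ℂ (StrongDual ℂ B) →L[ℂ] StrongDual ℂ (StrongDual ℂ A) :=
  (compL ℂ (StrongDual ℂ A) (StrongDual ℂ B) ℂ).flip (dualT T)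

/-- The identification `Θ : A'' × B'' → (A × B)''`, `Θ(Φ,Ψ)(F) = Φ(F∘inl) + Ψ(F∘inr)`,
i.e. `Θ(Φ,Ψ)(f,g) = Φ(f) + Ψ(g)` under the identification `(A × B)' ≅ A' × B'`. -/
noncomputable def Theta (Φ : StrongDual ℂ (StrongDual ℂ A)) (Ψ : StrongDual ℂ (StrongDual ℂ B)) :
    StrongDual ℂ (StrongDual ℂ (A × B)) :=
  Φ.comp ((compL ℂ A (A × B) ℂ).flip (inl ℂ A B)) +
  Ψ.comp ((compL ℂ B (A × B) ℂ).flip (inr ℂ A B))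

/-- The functional `(a,b) ↦ φ(a) + φ(T(b))` on `A × B`, for `φ : A → ℂ`. -/
noncomputable def charExt (T : B →L[ℂ] A) (φ : A →L[ℂ] ℂ) : (A × B) →L[ℂ] ℂ :=
  φ.comp (fst ℂ A B) + (φ.comp T).comp (snd ℂ A B)

/-- The functional `(a,b) ↦ ψ(b)` on `A × B`, for `ψ : B → ℂ`. -/
noncomputable def charSnd (ψ : B →L[ℂ] ℂ) : (A × B) →L[ℂ] ℂ :=
  ψ.comp (snd ℂ A B)

/-!
Inner means transfer along bounded linear maps `φ : E → E'` that intertwine the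
multiplications, in the sense that every `x'` has some `x` with `φ (a x) = φ a x'` and
`φ (x a) = x' φ a`: if `W` is a `(χ' ∘ φ)`-inner mean on `E`, then `φ'' W` is a `χ'`-inner
mean on `E'`. Both directions are instances. From `A ×_T B` to `B` take `φ = snd` and
`x = (0, x')`; then `φ'' (m, n) = n`. From `B` to `A ×_T B` take `φ b = (-T b, b)`, which maps
`B` onto the ideal `ker ((a, b) ↦ a + T b)`, and `x = u.2`; then `φ'' n = (-T'' n, n)`.
-/

section Arens

variable {E E' : Type*} [NormedAddCommGroup E] [NormedSpace ℂ E]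
  [NormedAddCommGroup E'] [NormedSpace ℂ E']

noncomputable def dualMap (φ : E →L[ℂ] E') : StrongDual ℂ E' →L[ℂ] StrongDual ℂ E :=
  (compL ℂ E E' ℂ).flip φ

@[simp]
lemma dualMap_apply (φ : E →L[ℂ] E') (f : StrongDual ℂ E') : dualMap φ f = f.comp φ := rfl

def IsInnerMean (M : E →L[ℂ] E →L[ℂ] E) (χ : StrongDual ℂ E)
    (W : StrongDual ℂ (StrongDual ℂ E)) : Prop :=
  W χ = 1 ∧ ∀ x : E, arens1 M W (inclusionInDoubleDual ℂ E x) =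
    arens1 M (inclusionInDoubleDual ℂ E x) W

lemma arens1_comm_inclusionInDoubleDual_iff (M : E →L[ℂ] E →L[ℂ] E)
    (W : StrongDual ℂ (StrongDual ℂ E)) (x : E) :
    arens1 M W (inclusionInDoubleDual ℂ E x) = arens1 M (inclusionInDoubleDual ℂ E x) W ↔
      ∀ f : StrongDual ℂ E, W (f.comp (M.flip x)) = W (f.comp (M x)) :=
  ContinuousLinearMap.ext_iff

lemma IsInnerMean.comp_dualMap {M : E →L[ℂ] E →L[ℂ] E} {M' : E' →L[ℂ] E' →L[ℂ] E'}
    {χ : StrongDual ℂ E} {χ' : StrongDual ℂ E'} {W : StrongDual ℂ (StrongDual ℂ E)}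
    (hW : IsInnerMean M χ W) (φ : E →L[ℂ] E') (hχ : χ'.comp φ = χ)
    (hφ : ∀ x' : E', ∃ x : E, ∀ a : E, φ (M a x) = M' (φ a) x' ∧ φ (M x a) = M' x' (φ a)) :
    IsInnerMean M' χ' (W.comp (dualMap φ)) := by
  refine ⟨by simpa [hχ] using hW.1, fun x' => ?_⟩
  obtain ⟨x, hx⟩ := hφ x'
  rw [arens1_comm_inclusionInDoubleDual_iff]
  intro g
  have hright : (g.comp (M'.flip x')).comp φ = (g.comp φ).comp (M.flip x) := by
    ext a; simp [(hx a).1]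
  have hleft : (g.comp (M' x')).comp φ = (g.comp φ).comp (M x) := by
    ext a; simp [(hx a).2]
  simpa [hright, hleft] using
    (arens1_comm_inclusionInDoubleDual_iff M W x).1 (hW.2 x) (g.comp φ)

end Arens

section

omit [CompleteSpace A] [CompleteSpace B]

section

omit [IsScalarTower ℂ A A] [SMulCommClass ℂ A A] [IsScalarTower ℂ B B] [SMulCommClass ℂ B B]

noncomputable def skewInr (T : B →L[ℂ] A) : B →L[ℂ] A × B :=
  inr ℂ A B - (inl ℂ A B).comp T

lemma skewInr_apply (T : B →L[ℂ] A) (b : B) : skewInr T b = (-T b, b) := by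
  simp [skewInr]

lemma Theta_comp_dualMap_snd (m : StrongDual ℂ (StrongDual ℂ A))
    (n : StrongDual ℂ (StrongDual ℂ B)) : (Theta m n).comp (dualMap (snd ℂ A B)) = n := by
  ext g
  have hinl : (g.comp (snd ℂ A B)).comp (inl ℂ A B) = 0 := by ext; simp
  have hinr : (g.comp (snd ℂ A B)).comp (inr ℂ A B) = g := by ext; simp
  simp [Theta, hinl, hinr]

lemma Theta_neg_ddT (T : B →L[ℂ] A) (n : StrongDual ℂ (StrongDual ℂ B)) :
    Theta (-(ddT T n)) n = n.comp (dualMap (skewInr T)) := by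
  ext F
  have hF : F.comp (skewInr T) = F.comp (inr ℂ A B) - (F.comp (inl ℂ A B)).comp T := by
    ext b; simp [skewInr]
  simp [Theta, ddT, dualT, hF, sub_eq_neg_add]

end

lemma tMulCLM_apply (T : B →L[ℂ] A) (u v : A × B) : tMulCLM T u v = tMul T u v := by
  simp [tMulCLM, bcomp, tMul]

lemma IsInnerMean.comp_dualMap_snd {T : B →L[ℂ] A} {ψ : B →L[ℂ] ℂ}
    {W : StrongDual ℂ (StrongDual ℂ (A × B))} (hW : IsInnerMean (tMulCLM T) (charSnd ψ) W) :
    IsInnerMean (mul ℂ B) ψ (W.comp (dualMap (snd ℂ A B))) :=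
  hW.comp_dualMap (snd ℂ A B) rfl fun b => ⟨(0, b), fun v => by simp [tMulCLM_apply, tMul]⟩

lemma IsInnerMean.comp_dualMap_skewInr {T : B →L[ℂ] A} (hT : ∀ x y, T (x * y) = T x * T y)
    {ψ : B →L[ℂ] ℂ} {n : StrongDual ℂ (StrongDual ℂ B)} (hn : IsInnerMean (mul ℂ B) ψ n) :
    IsInnerMean (tMulCLM T) (charSnd ψ) (n.comp (dualMap (skewInr T))) := by
  refine hn.comp_dualMap (skewInr T) (by ext b; simp [charSnd, skewInr_apply])
    fun u => ⟨u.2, fun b => ?_⟩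
  constructor <;> ext <;> simp [tMulCLM_apply, tMul, skewInr_apply, hT]

end

theorem inner_amenable_charSnd_general
    (T : B →L[ℂ] A) (hT : ∀ x y, T (x * y) = T x * T y)
    (ψ : B →L[ℂ] ℂ) :
    ((∃ M : StrongDual ℂ (StrongDual ℂ (A × B)), M (charSnd ψ : (A × B) →L[ℂ] ℂ) = 1 ∧
        ∀ u : A × B, arens1 (tMulCLM T) M (inclusionInDoubleDual ℂ (A × B) u) =
          arens1 (tMulCLM T) (inclusionInDoubleDual ℂ (A × B) u) M) ↔
      (∃ n : StrongDual ℂ (StrongDual ℂ B), n ψ = 1 ∧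
        ∀ b : B, arens1 (mul ℂ B) n (inclusionInDoubleDual ℂ B b) =
          arens1 (mul ℂ B) (inclusionInDoubleDual ℂ B b) n)) ∧
    (∀ (m : StrongDual ℂ (StrongDual ℂ A)) (n : StrongDual ℂ (StrongDual ℂ B)),
      Theta m n (charSnd ψ : (A × B) →L[ℂ] ℂ) = 1 →
      (∀ u : A × B,
        arens1 (tMulCLM T) (Theta m n) (inclusionInDoubleDual ℂ (A × B) u) =
          arens1 (tMulCLM T) (inclusionInDoubleDual ℂ (A × B) u) (Theta m n)) →
      (n ψ = 1 ∧
        ∀ b : B, arens1 (mul ℂ B) n (inclusionInDoubleDual ℂ B b) =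
          arens1 (mul ℂ B) (inclusionInDoubleDual ℂ B b) n)) ∧
    (∀ n : StrongDual ℂ (StrongDual ℂ B), n ψ = 1 →
      (∀ b : B, arens1 (mul ℂ B) n (inclusionInDoubleDual ℂ B b) =
        arens1 (mul ℂ B) (inclusionInDoubleDual ℂ B b) n) →
      (Theta (-(ddT T n)) n (charSnd ψ : (A × B) →L[ℂ] ℂ) = 1 ∧
        ∀ u : A × B,
          arens1 (tMulCLM T) (Theta (-(ddT T n)) n) (inclusionInDoubleDual ℂ (A × B) u) =
            arens1 (tMulCLM T) (inclusionInDoubleDual ℂ (A × B) u) (Theta (-(ddT T n)) n))) := by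
  have fwd : ∀ W, IsInnerMean (tMulCLM T) (charSnd ψ) W →
      IsInnerMean (mul ℂ B) ψ (W.comp (dualMap (snd ℂ A B))) :=
    fun _ hW => hW.comp_dualMap_snd
  have bwd : ∀ n, IsInnerMean (mul ℂ B) ψ n →
      IsInnerMean (tMulCLM T) (charSnd ψ) (Theta (-(ddT T n)) n) :=
    fun n hn => Theta_neg_ddT T n ▸ hn.comp_dualMap_skewInr hT
  refine ⟨⟨fun ⟨W, hW⟩ => ⟨_, fwd W hW⟩, fun ⟨n, hn⟩ => ⟨_, bwd n hn⟩⟩,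
    fun m n h1 h2 => ?_, fun n h1 h2 => bwd n ⟨h1, h2⟩⟩
  exact Theta_comp_dualMap_snd m n ▸ fwd (Theta m n) ⟨h1, h2⟩

/-- for `ψ ∈ σ(B)`, `A ×_T B` is `(0,ψ)`-inner amenable iff `B` is
`ψ`-inner amenable; moreover if `(m,n)` is a `(0,ψ)`-inner mean for `A ×_T B` then `n`
is a `ψ`-inner mean for `B`, and if `n` is a `ψ`-inner mean for `B` then
`(−T''(n), n)` is a `(0,ψ)`-inner mean for `A ×_T B`. -/
theorem inner_amenable_charSnd
    (T : B →L[ℂ] A) (hT : ∀ x y, T (x * y) = T x * T y) (hTn : ‖T‖ ≤ 1)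
    (ψ : B →L[ℂ] ℂ) (hψ0 : ψ ≠ 0) (hψm : ∀ x y : B, ψ (x * y) = ψ x * ψ y) :
    ((∃ M : StrongDual ℂ (StrongDual ℂ (A × B)), M (charSnd ψ : (A × B) →L[ℂ] ℂ) = 1 ∧
        ∀ u : A × B, arens1 (tMulCLM T) M (inclusionInDoubleDual ℂ (A × B) u) =
          arens1 (tMulCLM T) (inclusionInDoubleDual ℂ (A × B) u) M) ↔
      (∃ n : StrongDual ℂ (StrongDual ℂ B), n ψ = 1 ∧
        ∀ b : B, arens1 (mul ℂ B) n (inclusionInDoubleDual ℂ B b) =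
          arens1 (mul ℂ B) (inclusionInDoubleDual ℂ B b) n)) ∧
    (∀ (m : StrongDual ℂ (StrongDual ℂ A)) (n : StrongDual ℂ (StrongDual ℂ B)),
      Theta m n (charSnd ψ : (A × B) →L[ℂ] ℂ) = 1 →
      (∀ u : A × B,
        arens1 (tMulCLM T) (Theta m n) (inclusionInDoubleDual ℂ (A × B) u) =
          arens1 (tMulCLM T) (inclusionInDoubleDual ℂ (A × B) u) (Theta m n)) →
      (n ψ = 1 ∧
        ∀ b : B, arens1 (mul ℂ B) n (inclusionInDoubleDual ℂ B b) =
          arens1 (mul ℂ B) (inclusionInDoubleDual ℂ B b) n)) ∧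
    (∀ n : StrongDual ℂ (StrongDual ℂ B), n ψ = 1 →
      (∀ b : B, arens1 (mul ℂ B) n (inclusionInDoubleDual ℂ B b) =
        arens1 (mul ℂ B) (inclusionInDoubleDual ℂ B b) n) →
      (Theta (-(ddT T n)) n (charSnd ψ : (A × B) →L[ℂ] ℂ) = 1 ∧
        ∀ u : A × B,
          arens1 (tMulCLM T) (Theta (-(ddT T n)) n) (inclusionInDoubleDual ℂ (A × B) u) =
            arens1 (tMulCLM T) (inclusionInDoubleDual ℂ (A × B) u) (Theta (-(ddT T n)) n))) :=
  inner_amenable_charSnd_general T hT ψ
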